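/- arXiv:cs/0604080 — 2 statements merged into one kernel-verified Lean document; each statement's English description precedes it below -/
import Mathlib

section
/- Every graph G with average degree d ≥ 2 contains an induced forest on at least 2n/(d+1) vertices, where n is the number of vertices of G. -/
/-!
Fix a bijection `o : V ≃ Fin n` and keep the vertices with at most one neighbour earlier in
`o`. They induce a forest: on a cycle, the vertex latest in `o` has two earlier neighbours.
Over all orderings, a vertex of degree `k` is kept exactly when it is among the first two
vertices of its closed neighbourhood, i.e. with frequency `min 2 (k + 1) / (k + 1)`. For
`d ≥ 2` this function of `k ∈ ℕ` lies above an affine function of `k` taking the value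
`2 / (d + 1)` at `d`, so the average size of the kept set is at least `2n / (d + 1)`.
-/

open Finset

section Rank

variable {V α : Type*} [LinearOrder α]

def rankIn (f : V → α) (A : Finset V) (x : V) : ℕ := #{a ∈ A | f a < f x}

variable {f : V → α} {A : Finset V}

theorem rankIn_lt_rankIn {u w : V} (hu : u ∈ A) (h : f u < f w) :
    rankIn f A u < rankIn f A w := by
  refine card_lt_card <| (ssubset_iff_of_subset ?_).2 ⟨u, ?_, ?_⟩
  · intro a
    simp only [mem_filter]
    exact fun ha => ⟨ha.1, ha.2.trans h⟩
  · simp [hu, h]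
  · simp

theorem rankIn_lt_card {x : V} (hx : x ∈ A) : rankIn f A x < #A :=
  card_lt_card <| filter_ssubset.2 ⟨x, hx, lt_irrefl _⟩

theorem rankIn_insert_self [DecidableEq V] (x : V) :
    rankIn f (insert x A) x = rankIn f A x := by
  simp [rankIn, filter_insert]

theorem injOn_rankIn (hf : Function.Injective f) : Set.InjOn (rankIn f A) A := by
  intro u hu w hw h
  rcases lt_trichotomy (f u) (f w) with huw | huw | huw
  · exact absurd h (rankIn_lt_rankIn hu huw).ne
  · exact hf huw
  · exact absurd h (rankIn_lt_rankIn hw huw).ne'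

theorem image_rankIn (hf : Function.Injective f) : A.image (rankIn f A) = range #A :=
  eq_of_subset_of_card_le (image_subset_iff.2 fun _ hx => mem_range.2 (rankIn_lt_card hx))
    (by rw [card_range, card_image_of_injOn (injOn_rankIn hf)])

theorem card_filter_rankIn_lt (hf : Function.Injective f) (j : ℕ) :
    #{u ∈ A | rankIn f A u < j} = min j #A := by
  have hrange : (range #A).filter (· < j) = range (min j #A) := by
    ext; simp only [mem_filter, mem_range]; omega
  have himage := filter_image (s := A) (f := rankIn f A) (p := (· < j))
  rw [← card_image_of_injOn ((injOn_rankIn hf).mono (filter_subset _ A)), ← himage,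
    image_rankIn hf, hrange, card_range]

theorem rankIn_comp_swap [DecidableEq V] {u v : V} (hu : u ∈ A) (hv : v ∈ A) (x : V) :
    rankIn (f ∘ Equiv.swap u v) A x = rankIn f A (Equiv.swap u v x) := by
  have hswap (a : V) : Equiv.swap u v a ∈ A ↔ a ∈ A := by
    rw [Equiv.swap_apply_def]; split_ifs <;> simp_all
  refine card_equiv (Equiv.swap u v) fun a => ?_
  simp only [mem_filter, Function.comp_apply, hswap]

end Rank

section Orderings

variable {V β : Type*} [Fintype V] [DecidableEq V] [Fintype β] [LinearOrder β]

theorem card_rankIn_lt_eq {A : Finset V} {u v : V} (hu : u ∈ A) (hv : v ∈ A) (j : ℕ) :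
    #{o : V ≃ β | rankIn o A v < j} = #{o : V ≃ β | rankIn o A u < j} := by
  have hswap (o : V ≃ β) : (Equiv.swap u v).trans ((Equiv.swap u v).trans o) = o := by
    ext; simp
  refine card_nbij' ((Equiv.swap u v).trans ·) ((Equiv.swap u v).trans ·) ?_ ?_
    (fun o _ => hswap o) (fun o _ => hswap o) <;>
  · intro o ho
    simpa [Equiv.coe_trans, rankIn_comp_swap hu hv] using ho

theorem card_rankIn_lt_mul_card {A : Finset V} {v : V} (hv : v ∈ A) (j : ℕ) :
    #{o : V ≃ β | rankIn o A v < j} * #A = Fintype.card (V ≃ β) * min j #A :=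
  calc #{o : V ≃ β | rankIn o A v < j} * #A
      = ∑ u ∈ A, #{o : V ≃ β | rankIn o A u < j} := by
        rw [sum_congr rfl fun u hu => (card_rankIn_lt_eq hu hv j).symm, sum_const, smul_eq_mul,
          mul_comm]
    _ = ∑ o : V ≃ β, #{u ∈ A | rankIn o A u < j} := by
        simp only [card_filter]; exact sum_comm
    _ = Fintype.card (V ≃ β) * min j #A := by
        simp [card_filter_rankIn_lt (Equiv.injective _)]

end Orderings

namespace SimpleGraph

theorem isAcyclic_of_forall_lower_neighbors {W α : Type*} [LinearOrder α]
    (H : SimpleGraph W) {f : W → α} (hf : Function.Injective f)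
    (hlow : ∀ x y z, H.Adj x y → H.Adj x z → f y < f x → f z < f x → y = z) :
    H.IsAcyclic := by
  classical
  intro v c hc
  -- the two cycle neighbours of a vertex of maximal key are distinct and both lower
  obtain ⟨x, hx, hmax⟩ := c.support.toFinset.exists_max_image f ⟨v, by simp⟩
  rw [List.mem_toFinset] at hx
  set c' := c.rotate x hx
  have hc' : c'.IsCycle := hc.rotate hx
  have lower : ∀ y ∈ c'.support, H.Adj x y → f y < f x := fun y hy hxy =>
    (hmax y (by simpa [c', c.mem_support_rotate_iff] using hy)).lt_of_ne
      (hf.ne hxy.ne.symm)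
  exact hc'.snd_ne_penultimate <| hlow x _ _ (c'.adj_snd hc'.not_nil)
    (c'.adj_penultimate hc'.not_nil).symm
    (lower _ (c'.getVert_mem_support 1) (c'.adj_snd hc'.not_nil))
    (lower _ (c'.getVert_mem_support _) (c'.adj_penultimate hc'.not_nil).symm)

variable {V α : Type*} [Fintype V] (G : SimpleGraph V) [G.LocallyFinite]

def greedyForest [LinearOrder α] (f : V → α) : Finset V :=
  {x | rankIn f (G.neighborFinset x) x < 2}

theorem isAcyclic_induce_greedyForest [LinearOrder α] {f : V → α} (hf : Function.Injective f) :
    (G.induce (G.greedyForest f : Set V)).IsAcyclic := by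
  refine isAcyclic_of_forall_lower_neighbors _ (hf.comp Subtype.val_injective)
    fun x y z hxy hxz hy hz => Subtype.ext ?_
  have hx : #{a ∈ G.neighborFinset x | f a < f x} ≤ 1 :=
    Nat.lt_succ_iff.1 (mem_filter.1 (mem_coe.1 x.2)).2
  exact card_le_one.1 hx _ (by simpa using ⟨hxy, hy⟩) _ (by simpa using ⟨hxz, hz⟩)

variable [DecidableEq V] {β : Type*} [Fintype β] [LinearOrder β]

theorem card_mem_greedyForest_mul (x : V) :
    #{o : V ≃ β | x ∈ G.greedyForest o} * (G.degree x + 1) =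
      Fintype.card (V ≃ β) * min 2 (G.degree x + 1) := by
  have hx : x ∉ G.neighborFinset x := by simp
  simpa [greedyForest, rankIn_insert_self, card_insert_of_notMem hx] using
    card_rankIn_lt_mul_card (β := β) (mem_insert_self x (G.neighborFinset x)) 2

theorem sum_card_greedyForest :
    ∑ o : V ≃ β, (#(G.greedyForest ⇑o) : ℝ) =
      Fintype.card (V ≃ β) * ∑ x, min 2 ((G.degree x : ℝ) + 1) / (G.degree x + 1) :=
  calc ∑ o : V ≃ β, (#(G.greedyForest ⇑o) : ℝ)
      = ∑ x, (#{o : V ≃ β | x ∈ G.greedyForest ⇑o} : ℝ) := by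
        simp only [card_filter, greedyForest, mem_filter, mem_univ, true_and]
        push_cast
        exact sum_comm
    _ = Fintype.card (V ≃ β) * ∑ x, min 2 ((G.degree x : ℝ) + 1) / (G.degree x + 1) := by
        rw [mul_sum]
        refine sum_congr rfl fun x _ => ?_
        rw [mul_div_assoc', eq_div_iff (by positivity)]
        exact_mod_cast G.card_mem_greedyForest_mul x

end SimpleGraph

theorem exists_affine_le_min_two_div {d : ℝ} (hd : 2 ≤ d) :
    ∃ c : ℝ, ∀ k : ℕ, 2 / (d + 1) + c * (k - d) ≤ min 2 ((k : ℝ) + 1) / (k + 1) := by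
  have hd1 : (0 : ℝ) < d + 1 := by linarith
  rcases le_total d 3 with hd3 | hd3
  · -- the chord of `2 / (k + 1)` through `k = 2` and `k = 3`
    refine ⟨-1 / 6, fun k => ?_⟩
    have hchord : 2 / (d + 1) ≤ 1 - d / 6 := by
      rw [div_le_iff₀ hd1]; nlinarith
    rcases Nat.eq_zero_or_pos k with rfl | hk
    · norm_num; linarith
    · have hk' : (1 : ℝ) ≤ k := by exact_mod_cast hk
      have hint : (0 : ℝ) ≤ (k - 2) * (k - 3) := by
        rcases le_or_gt k 2 with hk2 | hk2
        · have : (k : ℝ) ≤ 2 := by exact_mod_cast hk2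
          nlinarith
        · have : (3 : ℝ) ≤ k := by exact_mod_cast hk2
          nlinarith
      rw [min_eq_left (by linarith), le_div_iff₀ (by linarith)]
      nlinarith
  · -- the tangent of `2 / (k + 1)` at `k = d`
    refine ⟨-2 / (d + 1) ^ 2, fun k => ?_⟩
    have htangent :
        2 / (d + 1) + -2 / (d + 1) ^ 2 * (k - d) = (4 * d + 2 - 2 * k) / (d + 1) ^ 2 := by
      field_simp; ring
    rw [htangent]
    rcases Nat.eq_zero_or_pos k with rfl | hk
    · rw [CharP.cast_eq_zero, zero_add, min_eq_right one_le_two, div_one,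
        div_le_one (by positivity)]
      nlinarith
    · have hk' : (1 : ℝ) ≤ k := by exact_mod_cast hk
      rw [min_eq_left (by linarith), div_le_div_iff₀ (by positivity) (by linarith)]
      nlinarith [sq_nonneg ((k : ℝ) - d)]

theorem two_mul_card_div_le_sum_min_two_div {ι : Type*} (s : Finset ι) (k : ι → ℕ) {d : ℝ}
    (hd : 2 ≤ d) (hsum : ∑ i ∈ s, (k i : ℝ) = #s * d) :
    2 * #s / (d + 1) ≤ ∑ i ∈ s, min 2 ((k i : ℝ) + 1) / (k i + 1) := by
  obtain ⟨c, hc⟩ := exists_affine_le_min_two_div hd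
  calc 2 * #s / (d + 1) = ∑ i ∈ s, (2 / (d + 1) + c * (k i - d)) := by
        rw [sum_add_distrib, ← mul_sum, sum_sub_distrib, hsum, sum_const, sum_const, nsmul_eq_mul,
          nsmul_eq_mul]
        ring
    _ ≤ _ := sum_le_sum fun i _ => hc (k i)

theorem stmt_7_general {V : Type} [Fintype V] (G : SimpleGraph V)
    [DecidableRel G.Adj] (d : ℝ)
    (hd : d = 2 * G.edgeFinset.card / (Fintype.card V))
    (hd2 : 2 ≤ d) :
    ∃ S : Finset V, (G.induce (S : Set V)).IsAcyclic ∧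
      2 * (Fintype.card V : ℝ) / (d + 1) ≤ S.card := by
  classical
  set n := Fintype.card V
  have hn : (n : ℝ) ≠ 0 := by
    rintro h; rw [hd, h, div_zero] at hd2; norm_num at hd2
  have hdeg : ∑ x, (G.degree x : ℝ) = #(univ : Finset V) * d := by
    rw [card_univ, hd, mul_div_cancel₀ _ hn]; exact_mod_cast G.sum_degrees_eq_twice_card_edges
  have hordering : Nonempty (V ≃ Fin n) := ⟨Fintype.equivFin V⟩
  have hforests := mul_le_mul_of_nonneg_left (two_mul_card_div_le_sum_min_two_div univ _ hd2 hdeg)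
    (Nat.cast_nonneg (Fintype.card (V ≃ Fin n)))
  rw [← G.sum_card_greedyForest] at hforests
  obtain ⟨o, -, ho⟩ := exists_le_of_sum_le (f := fun _ => 2 * (n : ℝ) / (d + 1))
    (g := fun o : V ≃ Fin n => (#(G.greedyForest ⇑o) : ℝ)) univ_nonempty
    (by simpa [sum_const] using hforests)
  exact ⟨G.greedyForest o, G.isAcyclic_induce_greedyForest o.injective, ho⟩

/-- Every graph `G` on `n` vertices with average degree `d = 2m/n ≥ 2` contains an
induced forest on at least `2n/(d+1)` vertices. -/
theorem stmt_7 {V : Type} [Fintype V] [Nonempty V] (G : SimpleGraph V)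
    [DecidableRel G.Adj] (d : ℝ)
    (hd : d = 2 * G.edgeFinset.card / (Fintype.card V))
    (hd2 : 2 ≤ d) :
    ∃ S : Finset V, (G.induce (S : Set V)).IsAcyclic ∧
      2 * (Fintype.card V : ℝ) / (d + 1) ≤ S.card :=
  stmt_7_general G d hd hd2
end

section
/- Let f : ℕ → ℝ be nondecreasing and satisfy f(n) ≤ n + f(n−1) + f(n−6) for all n ≥ 20, with f(n) ≤ n·2^{3n/8} for all n < 20. Then f(n) ≤ n·2^{3n/8} for all n. -/
/-!
Put `a = 2^{3/8}`, so that `2^{3n/8} = aⁿ` and `a⁸ = 8`. The bound `1.29 ≤ a` gives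
`a⁵ + 1 ≤ a⁶`, i.e. `a` is at least the root of the characteristic equation `1 = α⁻¹ + α⁻⁶`.
Hence `g n = n aⁿ` satisfies `g n ≥ n + g (n-1) + g (n-6)` as soon as `n ≤ a^{n-1}`, which holds
for `n ≥ 20`, and `f ≤ g` follows by strong induction.
-/

theorem le_of_le_of_recurrence {f g : ℕ → ℝ} {N : ℕ} (hN : 0 < N)
    (hrec : ∀ n, N ≤ n → f n ≤ n + f (n - 1) + f (n - 6))
    (hg : ∀ n, N ≤ n → n + g (n - 1) + g (n - 6) ≤ g n)
    (hbase : ∀ n, n < N → f n ≤ g n) (n : ℕ) : f n ≤ g n := by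
  induction n using Nat.strong_induction_on with
  | _ n ih =>
    rcases lt_or_ge n N with hn | hn
    · exact hbase n hn
    · have h1 := ih (n - 1) (by omega)
      have h6 := ih (n - 6) (by omega)
      linarith [hrec n hn, hg n hn]

theorem natCast_add_one_le_pow_of_le {a : ℝ} {n₀ : ℕ} (hstep : 1 ≤ (n₀ : ℝ) * (a - 1))
    (hbase : (n₀ : ℝ) + 1 ≤ a ^ n₀) {n : ℕ} (hn : n₀ ≤ n) : (n : ℝ) + 1 ≤ a ^ n := by
  induction n, hn using Nat.le_induction with
  | base => exact hbase
  | succ n hn ih =>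
    have hn' : (n₀ : ℝ) ≤ n := by exact_mod_cast hn
    have ha : 0 ≤ a - 1 := by
      by_contra! h
      nlinarith [Nat.cast_nonneg (α := ℝ) n₀]
    rw [pow_succ]
    push_cast
    nlinarith [mul_le_mul_of_nonneg_right hn' ha]

theorem natCast_mul_pow_recurrence {a : ℝ} (ha : 0 ≤ a) (hchar : a ^ 5 + 1 ≤ a ^ 6) {k : ℕ}
    (hk : (k : ℝ) + 6 ≤ a ^ (k + 5)) :
    ((k : ℝ) + 6) + ((k : ℝ) + 5) * a ^ (k + 5) + k * a ^ k ≤ ((k : ℝ) + 6) * a ^ (k + 6) := by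
  have hscaled : a ^ (k + 5) + a ^ k ≤ a ^ (k + 6) := by
    have := mul_le_mul_of_nonneg_left hchar (pow_nonneg ha k)
    rw [pow_add, pow_add]
    linarith
  have hk0 : (0 : ℝ) ≤ k + 6 := by positivity
  nlinarith [mul_le_mul_of_nonneg_left hscaled hk0, pow_nonneg ha k]

theorem pow_five_add_one_le_pow_six {a : ℝ} (ha : 1.29 ≤ a) : a ^ 5 + 1 ≤ a ^ 6 := by
  have h5 : (1.29 : ℝ) ^ 5 ≤ a ^ 5 := pow_le_pow_left₀ (by norm_num) ha 5
  have : (1.29 : ℝ) ^ 5 * 0.29 ≤ a ^ 5 * (a - 1) :=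
    mul_le_mul h5 (by linarith) (by norm_num) (by positivity)
  nlinarith

theorem two_rpow_three_eighths_pow_eight : ((2 : ℝ) ^ ((3 : ℝ) / 8)) ^ 8 = 8 := by
  rw [← Real.rpow_natCast, ← Real.rpow_mul (by norm_num)]
  norm_num

theorem le_two_rpow_three_eighths : 1.29 ≤ (2 : ℝ) ^ ((3 : ℝ) / 8) :=
  le_of_pow_le_pow_left₀ (n := 8) (by norm_num) (by positivity)
    (by rw [two_rpow_three_eighths_pow_eight]; norm_num)

theorem natCast_add_one_le_two_rpow_three_eighths_pow {n : ℕ} (hn : 19 ≤ n) :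
    (n : ℝ) + 1 ≤ ((2 : ℝ) ^ ((3 : ℝ) / 8)) ^ n := by
  have ha := le_two_rpow_three_eighths
  refine natCast_add_one_le_pow_of_le (by norm_num; linarith) ?_ hn
  have h16 : ((2 : ℝ) ^ ((3 : ℝ) / 8)) ^ 16 = 64 := by
    rw [show 16 = 8 * 2 by rfl, pow_mul, two_rpow_three_eighths_pow_eight]; norm_num
  rw [show 19 = 16 + 3 by rfl, pow_add, h16]
  push_cast
  nlinarith [one_le_pow₀ (n := 3) (show (1 : ℝ) ≤ (2 : ℝ) ^ ((3 : ℝ) / 8) by linarith)]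

theorem stmt_13_general (f : ℕ → ℝ)
    (hrec : ∀ n : ℕ, 20 ≤ n → f n ≤ n + f (n - 1) + f (n - 6))
    (hbase : ∀ n : ℕ, n < 20 → f n ≤ n * (2 : ℝ) ^ (3 * (n : ℝ) / 8)) :
    ∀ n : ℕ, f n ≤ n * (2 : ℝ) ^ (3 * (n : ℝ) / 8) := by
  have hpow (n : ℕ) : (2 : ℝ) ^ (3 * (n : ℝ) / 8) = ((2 : ℝ) ^ ((3 : ℝ) / 8)) ^ n := by
    rw [← Real.rpow_natCast, ← Real.rpow_mul (by norm_num)]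
    ring_nf
  simp only [hpow] at hbase ⊢
  refine le_of_le_of_recurrence (by norm_num) hrec (fun n hn => ?_) hbase
  obtain ⟨k, rfl⟩ : ∃ k, n = k + 6 := ⟨n - 6, by omega⟩
  have hk := natCast_add_one_le_two_rpow_three_eighths_pow (n := k + 5) (by omega)
  have ha := le_two_rpow_three_eighths
  rw [show k + 6 - 1 = k + 5 by omega, Nat.add_sub_cancel]
  push_cast at hk ⊢
  linarith [natCast_mul_pow_recurrence (by linarith) (pow_five_add_one_le_pow_six ha)
    (k := k) (by linarith)]

/-- If `f : ℕ → ℝ` is nondecreasing, satisfies `f(n) ≤ n + f(n−1) + f(n−6)` for all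
`n ≥ 20`, and `f(n) ≤ n · 2^{3n/8}` for all `n < 20`, then `f(n) ≤ n · 2^{3n/8}`
for all `n`. -/
theorem stmt_13 (f : ℕ → ℝ) (hmono : Monotone f)
    (hrec : ∀ n : ℕ, 20 ≤ n → f n ≤ n + f (n - 1) + f (n - 6))
    (hbase : ∀ n : ℕ, n < 20 → f n ≤ n * (2 : ℝ) ^ (3 * (n : ℝ) / 8)) :
    ∀ n : ℕ, f n ≤ n * (2 : ℝ) ^ (3 * (n : ℝ) / 8) :=
  stmt_13_general f hrec hbase
end
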